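/- Let K ≥ 1, β > 0, and for each client k ∈ {1,…,K} let F_k be an N_k×m real matrix and Y_k an N_k×d real matrix. Define C_k = FₖᵀFₖ + βI, L̂_k = C_k⁻¹FₖᵀY_k, S_k = Σ_{i=1}^k C_i, μ_k = S_k⁻¹S_{k−1}, ν_k = S_k⁻¹C_k, and the recursion M₀ = 0, M_k = μ_k M_{k−1} + ν_k L̂_k. Then the final knowledge fusion matrix has the closed form M_K = (Σ_{k=1}^K FₖᵀFₖ + Kβ I)⁻¹ (Σ_{k=1}^K FₖᵀY_k). -/

import Mathlib

/-!
Writing `S k = ∑_{i ≤ k} C i` and `T k = ∑_{i ≤ k} C i L̂ i`, the recursion reads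
`M k = S k⁻¹ (S (k-1) M (k-1) + C k L̂ k)`, so `S k M k = T k` is preserved from one step to the
next: the server's model is always the `C`-weighted average of the local models. Since
`C k L̂ k = Fₖᵀ Yₖ` and `S K = ∑ Fₖᵀ Fₖ + K β I`, this is the joint ridge-regression solution.
-/

open Matrix

open Finset in
theorem eq_inv_sum_mul_sum_of_recursion {n p R : Type*} [Fintype n] [DecidableEq n] [CommRing R]
    (A : ℕ → Matrix n n R) (L M : ℕ → Matrix n p R) {K : ℕ}
    (hA : ∀ k, 1 ≤ k → IsUnit (∑ i ∈ Icc 1 k, A i).det)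
    (hM0 : M 0 = 0)
    (hMrec : ∀ k, 1 ≤ k → k ≤ K → M k = (∑ i ∈ Icc 1 k, A i)⁻¹ * (∑ i ∈ Icc 1 (k - 1), A i) *
      M (k - 1) + (∑ i ∈ Icc 1 k, A i)⁻¹ * A k * L k) :
    ∀ k ≤ K, M k = (∑ i ∈ Icc 1 k, A i)⁻¹ * ∑ i ∈ Icc 1 k, A i * L i := by
  intro k hk
  induction k with
  | zero => simp [hM0]
  | succ k ih =>
    have hSM : (∑ i ∈ Icc 1 k, A i) * M k = ∑ i ∈ Icc 1 k, A i * L i := by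
      rcases k.eq_zero_or_pos with rfl | hk0
      · simp
      · rw [ih (by omega), mul_nonsing_inv_cancel_left _ _ (hA k hk0)]
    rw [hMrec (k + 1) (by omega) hk, Nat.add_sub_cancel, Matrix.mul_assoc, Matrix.mul_assoc,
      ← Matrix.mul_add, hSM, ← sum_Icc_succ_top (by omega) fun i => A i * L i]

theorem posDef_transpose_mul_self_add_smul_one {m n : Type*} [Fintype m] [Fintype n]
    [DecidableEq n] (F : Matrix m n ℝ) {β : ℝ} (hβ : 0 < β) : (Fᵀ * F + β • 1).PosDef := by
  refine PosDef.posSemidef_add ?_ (PosDef.one.smul hβ)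
  simpa using posSemidef_conjTranspose_mul_self F

theorem stmt_8_general (m d K : ℕ) (β : ℝ) (hβ : 0 < β)
    (N : ℕ → ℕ)
    (F : (k : ℕ) → Matrix (Fin (N k)) (Fin m) ℝ)
    (Y : (k : ℕ) → Matrix (Fin (N k)) (Fin d) ℝ)
    (C : ℕ → Matrix (Fin m) (Fin m) ℝ)
    (hC : ∀ k, C k = (F k)ᵀ * F k + β • (1 : Matrix (Fin m) (Fin m) ℝ))
    (L : ℕ → Matrix (Fin m) (Fin d) ℝ)
    (hL : ∀ k, L k = (C k)⁻¹ * ((F k)ᵀ * Y k))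
    (S : ℕ → Matrix (Fin m) (Fin m) ℝ)
    (hS : ∀ k, S k = ∑ i ∈ Finset.Icc 1 k, C i)
    (μ ν : ℕ → Matrix (Fin m) (Fin m) ℝ)
    (hμ : ∀ k, μ k = (S k)⁻¹ * S (k - 1))
    (hν : ∀ k, ν k = (S k)⁻¹ * C k)
    (M : ℕ → Matrix (Fin m) (Fin d) ℝ)
    (hM0 : M 0 = 0)
    (hMrec : ∀ k, 1 ≤ k → k ≤ K → M k = μ k * M (k - 1) + ν k * L k) :
    M K = (∑ k ∈ Finset.Icc 1 K, (F k)ᵀ * F k +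
          ((K : ℝ) * β) • (1 : Matrix (Fin m) (Fin m) ℝ))⁻¹ *
        ∑ k ∈ Finset.Icc 1 K, (F k)ᵀ * Y k := by
  have hCpd (k : ℕ) : (C k).PosDef := hC k ▸ posDef_transpose_mul_self_add_smul_one (F k) hβ
  have hCL (k : ℕ) : C k * L k = (F k)ᵀ * Y k := by
    rw [hL, mul_nonsing_inv_cancel_left _ _ ((isUnit_iff_isUnit_det _).mp (hCpd k).isUnit)]
  have hSunit (k : ℕ) (hk : 1 ≤ k) : IsUnit (∑ i ∈ Finset.Icc 1 k, C i).det :=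
    (isUnit_iff_isUnit_det _).mp (posDef_sum (Finset.nonempty_Icc.mpr hk) fun i _ => hCpd i).isUnit
  have hSK : ∑ k ∈ Finset.Icc 1 K, C k =
      ∑ k ∈ Finset.Icc 1 K, (F k)ᵀ * F k + ((K : ℝ) * β) • (1 : Matrix (Fin m) (Fin m) ℝ) := by
    simp only [hC, Finset.sum_add_distrib, Finset.sum_const, Nat.card_Icc, Nat.add_sub_cancel,
      ← Nat.cast_smul_eq_nsmul ℝ, smul_smul]
  have hfusion := eq_inv_sum_mul_sum_of_recursion C L M hSunit hM0 (fun k hk hkK => by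
    rw [hMrec k hk hkK, hμ, hν, hS, hS, Matrix.mul_assoc, Matrix.mul_assoc]) K le_rfl
  simpa only [hCL, hSK] using hfusion

theorem stmt_8 (m d K : ℕ) (hK : 1 ≤ K) (β : ℝ) (hβ : 0 < β)
    (N : ℕ → ℕ)
    (F : (k : ℕ) → Matrix (Fin (N k)) (Fin m) ℝ)
    (Y : (k : ℕ) → Matrix (Fin (N k)) (Fin d) ℝ)
    (C : ℕ → Matrix (Fin m) (Fin m) ℝ)
    (hC : ∀ k, C k = (F k)ᵀ * F k + β • (1 : Matrix (Fin m) (Fin m) ℝ))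
    (L : ℕ → Matrix (Fin m) (Fin d) ℝ)
    (hL : ∀ k, L k = (C k)⁻¹ * ((F k)ᵀ * Y k))
    (S : ℕ → Matrix (Fin m) (Fin m) ℝ)
    (hS : ∀ k, S k = ∑ i ∈ Finset.Icc 1 k, C i)
    (μ ν : ℕ → Matrix (Fin m) (Fin m) ℝ)
    (hμ : ∀ k, μ k = (S k)⁻¹ * S (k - 1))
    (hν : ∀ k, ν k = (S k)⁻¹ * C k)
    (M : ℕ → Matrix (Fin m) (Fin d) ℝ)
    (hM0 : M 0 = 0)
    (hMrec : ∀ k, 1 ≤ k → k ≤ K → M k = μ k * M (k - 1) + ν k * L k) :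
    M K = (∑ k ∈ Finset.Icc 1 K, (F k)ᵀ * F k +
          ((K : ℝ) * β) • (1 : Matrix (Fin m) (Fin m) ℝ))⁻¹ *
        ∑ k ∈ Finset.Icc 1 K, (F k)ᵀ * Y k :=
  stmt_8_general m d K β hβ N F Y C hC L hL S hS μ ν hμ hν M hM0 hMrec
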